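/- For history-deterministic labelled transition systems A and B, the following are equivalent: (1) A and B are in two-sided simulation relation; (2) L_T(A) = L_T(B). -/

import Mathlib

/-- A labelled transition system over alphabet `A`. -/
structure LTS (A : Type) where
  Conf : Type
  init : Conf
  Step : Conf → A → Conf → Prop

/-- `Reads L c w` : there is a path from configuration `c` reading the word `w`. -/
inductive LTS.Reads {A : Type} (L : LTS A) : L.Conf → List A → Prop
  | nil (c : L.Conf) : LTS.Reads L c []
  | cons {c c' : L.Conf} {a : A} {w : List A} :
      L.Step c a c' → LTS.Reads L c' w → LTS.Reads L c (a :: w)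

/-- The trace language of an LTS: all words readable from the initial configuration. -/
def LTS.TraceLang {A : Type} (L : LTS A) : Set (List A) :=
  {w | L.Reads L.init w}

/-- `Simulates P Q` : `P` simulates `Q` (Duplicator plays in `P`, Spoiler in `Q`),
via a simulation relation containing the pair of initial configurations. -/
def Simulates {A : Type} (P Q : LTS A) : Prop :=
  ∃ S : P.Conf → Q.Conf → Prop, S P.init Q.init ∧
    ∀ cP cQ, S cP cQ → ∀ a cQ', Q.Step cQ a cQ' →
      ∃ cP', P.Step cP a cP' ∧ S cP' cQ'

/-- Two-sided simulation: each LTS simulates the other. -/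
def TwoSidedSim {A : Type} (P Q : LTS A) : Prop :=
  Simulates P Q ∧ Simulates Q P

/-- The run induced by a resolver `r` (a function of the history of the run,
the current configuration and the next letter) is valid along `w`:
every transition chosen by the resolver is enabled. -/
inductive ResolverRun {A : Type} (L : LTS A)
    (r : List (L.Conf × A) → L.Conf → A → L.Conf) :
    List (L.Conf × A) → L.Conf → List A → Prop
  | nil (h : List (L.Conf × A)) (c : L.Conf) : ResolverRun L r h c []
  | cons {h : List (L.Conf × A)} {c : L.Conf} {a : A} {w : List A} :
      L.Step c a (r h c a) →
      ResolverRun L r (h ++ [(c, a)]) (r h c a) w →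
      ResolverRun L r h c (a :: w)

/-- `r` is a resolver for `L`: following `r` from the initial configuration
produces a valid run over every word of the trace language. -/
def IsResolver {A : Type} (L : LTS A)
    (r : List (L.Conf × A) → L.Conf → A → L.Conf) : Prop :=
  ∀ w ∈ L.TraceLang, ResolverRun L r [] L.init w

/-- An LTS is history-deterministic if it admits a resolver. -/
def HistoryDeterministic {A : Type} (L : LTS A) : Prop :=
  ∃ r, IsResolver L r

/-! A simulation transports runs step by step, so it includes trace languages. Conversely, if
`L_T(Q) ⊆ L_T(P)` and `r` resolves `P`, relate `cP` to `cQ` when, for some history `h`, the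
resolver started at `(h, cP)` reads every word readable from `cQ`; this holds initially and is
preserved when Duplicator answers each Spoiler move with the transition chosen by `r`. -/

theorem LTS.Reads.of_simulation {A : Type} {P Q : LTS A} {S : P.Conf → Q.Conf → Prop}
    (hS : ∀ cP cQ, S cP cQ → ∀ a cQ', Q.Step cQ a cQ' → ∃ cP', P.Step cP a cP' ∧ S cP' cQ')
    {w : List A} {cP : P.Conf} {cQ : Q.Conf} (hrel : S cP cQ) (hw : Q.Reads cQ w) :
    P.Reads cP w := by
  induction hw generalizing cP with
  | nil => exact .nil cP
  | cons hstep _ ih =>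
    obtain ⟨cP', hstepP, hrel'⟩ := hS _ _ hrel _ _ hstep
    exact .cons hstepP (ih hrel')

theorem Simulates.traceLang_subset {A : Type} {P Q : LTS A} (h : Simulates P Q) :
    Q.TraceLang ⊆ P.TraceLang := by
  obtain ⟨S, hinit, hS⟩ := h
  exact fun _ hw => LTS.Reads.of_simulation hS hinit hw

theorem HistoryDeterministic.simulates_of_traceLang_subset {A : Type} {P Q : LTS A}
    (hP : HistoryDeterministic P) (hsub : Q.TraceLang ⊆ P.TraceLang) : Simulates P Q := by
  obtain ⟨r, hr⟩ := hP
  refine ⟨fun cP cQ => ∃ h, ∀ w, Q.Reads cQ w → ResolverRun P r h cP w,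
    ⟨[], fun w hw => hr w (hsub hw)⟩, ?_⟩
  rintro cP cQ ⟨h, hrun⟩ a cQ' hstep
  refine ⟨r h cP a, ?_, h ++ [(cP, a)], fun w hw => ?_⟩
  · cases hrun [a] (.cons hstep (.nil cQ')) with
    | cons hstepP _ => exact hstepP
  · cases hrun (a :: w) (.cons hstep hw) with
    | cons _ hrest => exact hrest

/-- For history-deterministic LTSs, two-sided simulation is equivalent
to trace-language equality. -/
theorem hd_twoSidedSim_iff_traceLang_eq {A : Type} (P Q : LTS A)
    (hP : HistoryDeterministic P) (hQ : HistoryDeterministic Q) :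
    TwoSidedSim P Q ↔ P.TraceLang = Q.TraceLang :=
  ⟨fun ⟨hPQ, hQP⟩ => hQP.traceLang_subset.antisymm hPQ.traceLang_subset,
    fun h => ⟨hP.simulates_of_traceLang_subset h.superset,
      hQ.simulates_of_traceLang_subset h.subset⟩⟩
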